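/- arXiv:1905.03682 — 2 statements merged into one kernel-verified Lean document; each statement's English description precedes it below -/
import Mathlib

section
/- Let h be an N×N real matrix with nonnegative entries, let i, j be indices, let d ≥ 1 be an integer such that (h^n)_{ij} = 0 for all 0 ≤ n < d, and suppose every eigenvalue of h has absolute value at most h_max > 0. If h is symmetric, then for every real α > 1 and t ≥ 0, (exp(t h))_{ij} ≤ (e^{α h_max t} − 1) · α^{−d}. -/
/-!
Expand `exp (t • h) i j = ∑ tⁿ/n! (hⁿ) i j`. The terms with `n < d` vanish. For the others,
`|(hⁿ) i j|` is at most the ℓ² operator norm of `hⁿ`, which for the self-adjoint `h` is the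
largest `|λ|ⁿ ≤ hmaxⁿ`. Since `n ≥ d` the weight `αⁿ⁻ᵈ ≥ 1` can be inserted for free, and summing
`(α hmax t)ⁿ/n!` over `n ≥ 1` gives `exp (α hmax t) - 1`.
-/

open Matrix Unitary
open scoped Nat

namespace Matrix

variable {𝕜 : Type*} [RCLike 𝕜] {m n : Type*} [Fintype m] [Fintype n] [DecidableEq n]

theorem hasSum_exp_smul_apply (A : Matrix n n 𝕜) (t : 𝕜) (i j : n) :
    HasSum (fun k => t ^ k / k ! * (A ^ k) i j) (NormedSpace.exp (t • A) i j) := by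
  -- `exp` does not depend on a norm; any submultiplicative one makes its series converge.
  have hexp : HasSum (fun k => (k ! : 𝕜)⁻¹ • (t • A) ^ k) (NormedSpace.exp (t • A)) :=
    open scoped Matrix.Norms.Operator in NormedSpace.exp_series_hasSum_exp' (t • A)
  have := Pi.hasSum.mp (Pi.hasSum.mp hexp i) j
  simp only [smul_pow, smul_apply, smul_eq_mul] at this
  convert this using 2 with k
  ring

theorem IsHermitian.pow_eq {A : Matrix n n 𝕜} (hA : A.IsHermitian) (k : ℕ) :
    A ^ k = conjStarAlgAut 𝕜 _ hA.eigenvectorUnitary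
      (diagonal fun l => (hA.eigenvalues l : 𝕜) ^ k) := by
  conv_lhs => rw [hA.spectral_theorem, ← map_pow, diagonal_pow]
  rfl

open scoped Matrix.Norms.L2Operator

theorem norm_apply_le_l2_opNorm (A : Matrix m n 𝕜) (i : m) (j : n) : ‖A i j‖ ≤ ‖A‖ := by
  let e : EuclideanSpace 𝕜 n := EuclideanSpace.single j 1
  calc
    ‖A i j‖ = ‖(EuclideanSpace.equiv m 𝕜).symm (A *ᵥ e) i‖ := by simp [e]
    _ ≤ ‖(EuclideanSpace.equiv m 𝕜).symm (A *ᵥ e)‖ := PiLp.norm_apply_le _ _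
    _ ≤ ‖A‖ * ‖e‖ := A.l2_opNorm_mulVec e
    _ = ‖A‖ := by rw [PiLp.norm_single, norm_one, mul_one]

theorem IsHermitian.l2_opNorm_pow_le {A : Matrix n n 𝕜} (hA : A.IsHermitian) {r : ℝ}
    (hr₀ : 0 ≤ r) (hr : ∀ μ ∈ spectrum ℝ A, |μ| ≤ r) (k : ℕ) : ‖A ^ k‖ ≤ r ^ k := by
  rw [hA.pow_eq, conjStarAlgAut_apply, ← coe_star, CStarRing.norm_mul_coe_unitary,
    CStarRing.norm_coe_unitary_mul, l2_opNorm_diagonal, pi_norm_le_iff_of_nonneg (by positivity)]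
  intro l
  rw [norm_pow, RCLike.norm_ofReal]
  exact pow_le_pow_left₀ (abs_nonneg _) (hr _ (hA.eigenvalues_mem_spectrum_real l)) k

theorem IsHermitian.norm_pow_apply_le {A : Matrix n n 𝕜} (hA : A.IsHermitian) {r : ℝ}
    (hr₀ : 0 ≤ r) (hr : ∀ μ ∈ spectrum ℝ A, |μ| ≤ r) (k : ℕ) (i j : n) :
    ‖(A ^ k) i j‖ ≤ r ^ k :=
  (norm_apply_le_l2_opNorm _ i j).trans (hA.l2_opNorm_pow_le hr₀ hr k)

end Matrix

theorem Real.hasSum_pow_succ_div_factorial (x : ℝ) :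
    HasSum (fun n => x ^ (n + 1) / (n + 1)!) (Real.exp x - 1) := by
  have := (hasSum_nat_add_iff' 1).mpr (Real.exp_eq_exp_ℝ ▸ NormedSpace.expSeries_div_hasSum_exp x)
  simpa using this

theorem le_mul_pow_mul_inv_pow {a r α : ℝ} {n d : ℕ} (hr : 0 ≤ r) (hα : 1 ≤ α)
    (ha₀ : n < d → a = 0) (ha : a ≤ r ^ n) : a ≤ (α * r) ^ n * α⁻¹ ^ d := by
  rcases lt_or_ge n d with hn | hn
  · have hα₀ : 0 ≤ α := zero_le_one.trans hα
    rw [ha₀ hn]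
    positivity
  · have hαd : 1 ≤ α ^ n * α⁻¹ ^ d := by
      rw [inv_pow, ← div_eq_mul_inv, one_le_div (by positivity)]
      exact pow_le_pow_right₀ hα hn
    calc a ≤ r ^ n * 1 := by rwa [mul_one]
      _ ≤ r ^ n * (α ^ n * α⁻¹ ^ d) := by gcongr
      _ = (α * r) ^ n * α⁻¹ ^ d := by ring

theorem stmt_4_general {N : ℕ} (h : Matrix (Fin N) (Fin N) ℝ)
    (hsymm : h.IsSymm)
    (i j : Fin N) (d : ℕ) (hd : 1 ≤ d)
    (hzero : ∀ n < d, (h ^ n) i j = 0)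
    (hmax : ℝ) (hmaxpos : 0 < hmax)
    (hspec : ∀ μ ∈ spectrum ℝ h, |μ| ≤ hmax)
    (α t : ℝ) (hα : 1 < α) (ht : 0 ≤ t) :
    NormedSpace.exp (t • h) i j ≤ (Real.exp (α * hmax * t) - 1) * α⁻¹ ^ d := by
  have hA : h.IsHermitian := isHermitian_iff_isSymm.mpr hsymm
  have hentry (n : ℕ) : (h ^ n) i j ≤ (α * hmax) ^ n * α⁻¹ ^ d :=
    le_mul_pow_mul_inv_pow hmaxpos.le hα.le (hzero n)
      ((Real.le_norm_self _).trans (hA.norm_pow_apply_le hmaxpos.le hspec n i j))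
  have hexp := (hasSum_nat_add_iff' 1).mpr (h.hasSum_exp_smul_apply t i j)
  rw [Finset.sum_range_one, hzero 0 hd, mul_zero, sub_zero] at hexp
  refine hasSum_le (fun n => ?_) hexp
    ((Real.hasSum_pow_succ_div_factorial (α * hmax * t)).mul_right _)
  calc t ^ (n + 1) / (n + 1)! * (h ^ (n + 1)) i j
      ≤ t ^ (n + 1) / (n + 1)! * ((α * hmax) ^ (n + 1) * α⁻¹ ^ d) := by
        gcongr
        exact hentry (n + 1)
    _ = (α * hmax * t) ^ (n + 1) / (n + 1)! * α⁻¹ ^ d := by ring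

theorem stmt_4 {N : ℕ} (h : Matrix (Fin N) (Fin N) ℝ)
    (hpos : ∀ i j, 0 ≤ h i j) (hsymm : h.IsSymm)
    (i j : Fin N) (d : ℕ) (hd : 1 ≤ d)
    (hzero : ∀ n < d, (h ^ n) i j = 0)
    (hmax : ℝ) (hmaxpos : 0 < hmax)
    (hspec : ∀ μ ∈ spectrum ℝ h, |μ| ≤ hmax)
    (α t : ℝ) (hα : 1 < α) (ht : 0 ≤ t) :
    NormedSpace.exp (t • h) i j ≤ (Real.exp (α * hmax * t) - 1) * α⁻¹ ^ d :=
  stmt_4_general h hsymm i j d hd hzero hmax hmaxpos hspec α t hα ht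
end

section
/- Let h be an N×N real symmetric matrix with nonnegative entries and zero diagonal, and define h̃ by h̃_{ij} = h_{ij} for i ≠ j and h̃_{ii} = Σ_k h_{ik}. Then the largest eigenvalue of h̃ is at least twice the largest eigenvalue of h. -/
/-!
Let `v` be a unit eigenvector of `h` for its largest eigenvalue `μ`, and let `D` be the diagonal
matrix of row sums of `h`, so that `h̃ = h + D`. The matrix `D - h` is the Laplacian of the
weighted graph `h`, with quadratic form `½ ∑ᵢⱼ hᵢⱼ (xᵢ - xⱼ)² ≥ 0`. Hence
`⟪v, h̃ v⟫ = ⟪v, h v⟫ + ⟪v, D v⟫ ≥ 2 ⟪v, h v⟫ = 2μ`, and the Rayleigh quotient of `h̃` at `v` is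
bounded by the largest eigenvalue of `h̃`.
-/

open Finset Matrix

namespace Matrix

variable {n : Type*} [Fintype n] [DecidableEq n]

theorem IsHermitian.dotProduct_mulVec_le_sSup_spectrum {A : Matrix n n ℝ} (hA : A.IsHermitian)
    (x : n → ℝ) : x ⬝ᵥ (A *ᵥ x) ≤ sSup (spectrum ℝ A) * (x ⬝ᵥ x) := by
  set μ := sSup (spectrum ℝ A)
  have hpsd : (algebraMap ℝ (Matrix n n ℝ) μ - A).PosSemidef := by
    refine posSemidef_iff_isHermitian_and_spectrum_nonneg.mpr
      ⟨(isHermitian_diagonal _).sub hA, ?_⟩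
    rw [← spectrum.singleton_sub_eq]
    rintro _ ⟨_, rfl, b, hb, rfl⟩
    exact sub_nonneg.mpr (le_csSup finite_real_spectrum.bddAbove hb)
  have := hpsd.dotProduct_mulVec_nonneg x
  rw [sub_mulVec, Algebra.algebraMap_eq_smul_one, smul_mulVec, one_mulVec, star_trivial,
    dotProduct_sub, dotProduct_smul, smul_eq_mul] at this
  linarith

theorem IsHermitian.exists_dotProduct_mulVec_eq_sSup_spectrum [Nonempty n] {A : Matrix n n ℝ}
    (hA : A.IsHermitian) : ∃ v : n → ℝ, v ⬝ᵥ v = 1 ∧ v ⬝ᵥ (A *ᵥ v) = sSup (spectrum ℝ A) := by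
  rw [hA.spectrum_real_eq_range_eigenvalues]
  obtain ⟨i, hi⟩ := (Set.range_nonempty hA.eigenvalues).csSup_mem (Set.finite_range _)
  have hunit : ⇑(hA.eigenvectorBasis i) ⬝ᵥ ⇑(hA.eigenvectorBasis i) = 1 := by
    have := real_inner_self_eq_norm_sq (hA.eigenvectorBasis i)
    rw [hA.eigenvectorBasis.norm_eq_one, EuclideanSpace.inner_eq_star_dotProduct] at this
    simpa using this
  refine ⟨_, hunit, ?_⟩
  rw [hA.mulVec_eigenvectorBasis, dotProduct_smul, hunit, hi, smul_eq_mul, mul_one]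

theorem dotProduct_mulVec_le_dotProduct_diagonal_sum {R : Type*} [CommRing R] [LinearOrder R]
    [IsStrictOrderedRing R] {h : Matrix n n R} (hsymm : h.IsSymm) (hpos : ∀ i j, 0 ≤ h i j)
    (x : n → R) : x ⬝ᵥ (h *ᵥ x) ≤ x ⬝ᵥ (diagonal (fun i => ∑ j, h i j) *ᵥ x) := by
  have hdiag : x ⬝ᵥ (diagonal (fun i => ∑ j, h i j) *ᵥ x) = ∑ i, ∑ j, h i j * x i ^ 2 := by
    simp only [dotProduct, mulVec_diagonal, sum_mul, mul_sum]
    exact sum_congr rfl fun i _ => sum_congr rfl fun j _ => by ring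
  have hform : x ⬝ᵥ (h *ᵥ x) = ∑ i, ∑ j, h i j * (x i * x j) := by
    simp only [dotProduct, mulVec, mul_sum]
    exact sum_congr rfl fun i _ => sum_congr rfl fun j _ => by ring
  have hswap : ∑ i, ∑ j, h i j * x j ^ 2 = ∑ i, ∑ j, h i j * x i ^ 2 := by
    rw [sum_comm]
    exact sum_congr rfl fun i _ => sum_congr rfl fun j _ => by rw [hsymm.apply]
  have hexpand : ∑ i, ∑ j, h i j * (x i - x j) ^ 2 =
      ∑ i, ∑ j, h i j * x i ^ 2 + ∑ i, ∑ j, h i j * x j ^ 2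
        - 2 * ∑ i, ∑ j, h i j * (x i * x j) := by
    simp only [mul_sum, ← sum_add_distrib, ← sum_sub_distrib]
    exact sum_congr rfl fun i _ => sum_congr rfl fun j _ => by ring
  have hnonneg : 0 ≤ ∑ i, ∑ j, h i j * (x i - x j) ^ 2 :=
    sum_nonneg fun i _ => sum_nonneg fun j _ => mul_nonneg (hpos i j) (sq_nonneg _)
  linarith

theorem of_ite_sum_eq_add_diagonal {α : Type*} [AddCommMonoid α] {h : Matrix n n α}
    (hdiag : ∀ i, h i i = 0) :
    of (fun i j => if i = j then ∑ k, h i k else h i j) = h + diagonal (fun i => ∑ k, h i k) := by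
  ext i j
  by_cases hij : i = j
  · subst hij
    simp [hdiag]
  · simp [hij]

end Matrix

theorem stmt_5 {N : ℕ} (hN : 0 < N) (h : Matrix (Fin N) (Fin N) ℝ)
    (hsymm : h.IsSymm) (hpos : ∀ i j, 0 ≤ h i j) (hdiag : ∀ i, h i i = 0) :
    2 * sSup (spectrum ℝ h) ≤
      sSup (spectrum ℝ
        (Matrix.of (fun i j => if i = j then ∑ k, h i k else h i j) :
          Matrix (Fin N) (Fin N) ℝ)) := by
  have : Nonempty (Fin N) := Fin.pos_iff_nonempty.mp hN
  have hh : h.IsHermitian := isHermitian_iff_isSymm.mpr hsymm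
  obtain ⟨v, hv, hμ⟩ := hh.exists_dotProduct_mulVec_eq_sSup_spectrum
  set D := diagonal (fun i => ∑ k, h i k)
  rw [of_ite_sum_eq_add_diagonal hdiag]
  calc 2 * sSup (spectrum ℝ h) ≤ v ⬝ᵥ ((h + D) *ᵥ v) := by
        rw [add_mulVec, dotProduct_add, ← hμ]
        linarith [dotProduct_mulVec_le_dotProduct_diagonal_sum hsymm hpos v]
    _ ≤ sSup (spectrum ℝ (h + D)) := by
        simpa [hv] using (hh.add (isHermitian_diagonal _)).dotProduct_mulVec_le_sSup_spectrum v
end
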